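/- Let f(n) denote the maximum number of sets of cardinality at least 2 in a 2-laminar family of subsets of [n]. Let F be a 2-laminar family of subsets of [n] all of whose members have cardinality at least 2, let F* be the set of maximal elements (under inclusion) of F \ {[n]}, and for each k let b_k be the number of members of F* of cardinality k. Then |F| ≤ 1 + Σ_{2 ≤ k < n} f(k)·b_k. -/

import Mathlib

/-- `f n` is the maximum number of sets of cardinality at least `2` in a `2`-laminar
family of subsets of `[n]`. -/
noncomputable def f (n : ℕ) : ℕ :=
  sSup {m | ∃ F : Finset (Finset (Fin n)),
    (∀ A ∈ F, ∀ B ∈ F, 2 ≤ (A ∩ B).card → A ⊆ B ∨ B ⊆ A) ∧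
    (∀ A ∈ F, 2 ≤ A.card) ∧ F.card = m}

/-
Every member of `F' = F \ {[n]}` lies below a maximal one, so `F'` is covered by the
subfamilies `{A ∈ F' | A ⊆ M}` with `M ∈ F*`. Such a subfamily is a `2`-laminar family on the
`|M|`-element ground set `M`, hence has at most `f |M|` members; grouping the `M ∈ F*` by size
gives the bound, and `[n]` itself accounts for the `1`.
-/

open Finset

-- `f (#s)` needs its parentheses: `𝒜 # r` is the notation for `Finset.slice`.

def IsLaminar {α : Type*} [DecidableEq α] (t : ℕ) (F : Finset (Finset α)) : Prop :=
  ∀ A ∈ F, ∀ B ∈ F, t ≤ #(A ∩ B) → A ⊆ B ∨ B ⊆ A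

namespace IsLaminar

variable {α β : Type*} [DecidableEq α] [DecidableEq β] {t : ℕ} {F G : Finset (Finset α)}

theorem mono (hF : IsLaminar t F) (hGF : G ⊆ F) : IsLaminar t G :=
  fun A hA B hB => hF A (hGF hA) B (hGF hB)

theorem preimage_map (hF : IsLaminar t F) (e : β ↪ α) :
    IsLaminar t (F.preimage (map e) (map_injective e).injOn) := by
  intro A hA B hB hAB
  rw [mem_preimage] at hA hB
  have hmeet : t ≤ #(A.map e ∩ B.map e) := by rwa [← map_inter, card_map]
  simpa only [map_subset_map] using hF _ hA _ hB hmeet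

end IsLaminar

theorem card_le_f {k : ℕ} {G : Finset (Finset (Fin k))} (hG : IsLaminar 2 G)
    (hG₂ : ∀ A ∈ G, 2 ≤ #A) : #G ≤ f k :=
  le_csSup ⟨2 ^ k, fun _ ⟨H, _, _, hH⟩ => hH ▸ (card_le_univ H).trans_eq (by simp)⟩
    ⟨G, hG, hG₂, rfl⟩

theorem card_le_f_card_of_forall_subset {α : Type*} [DecidableEq α] {S : Finset α}
    {G : Finset (Finset α)} (hG : IsLaminar 2 G) (hG₂ : ∀ A ∈ G, 2 ≤ #A)
    (hGS : ∀ A ∈ G, A ⊆ S) : #G ≤ f (#S) := by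
  let e : Fin #S ↪ α := S.equivFin.symm.toEmbedding.trans (Function.Embedding.subtype _)
  have hrange : ∀ A ∈ G, A ∈ Set.range (map e) := by
    intro A hA
    have hAe : A ⊆ univ.map e := fun a ha => by
      simpa [e] using ⟨S.equivFin ⟨a, hGS A hA ha⟩, by simp⟩
    obtain ⟨B, -, rfl⟩ := subset_map_iff.mp hAe
    exact ⟨B, rfl⟩
  calc #G = #(G.preimage (map e) (map_injective e).injOn) := by
        rw [card_preimage, filter_true_of_mem hrange]
    _ ≤ f (#S) := card_le_f (hG.preimage_map e) fun B hB => by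
        simpa using hG₂ _ (mem_preimage.mp hB)

theorem card_le_sum_card_filter_le {ι : Type*} [DecidableEq ι] [LE ι] [DecidableLE ι]
    {P Q : Finset ι} (hPQ : ∀ a ∈ P, ∃ b ∈ Q, a ≤ b) :
    #P ≤ ∑ b ∈ Q, #(P.filter (· ≤ b)) :=
  calc #P ≤ #(Q.biUnion fun b => P.filter (· ≤ b)) := card_le_card fun a ha => by
        obtain ⟨b, hb, hab⟩ := hPQ a ha
        exact mem_biUnion.mpr ⟨b, hb, mem_filter.mpr ⟨ha, hab⟩⟩
    _ ≤ _ := card_biUnion_le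

/-- Structural bound: if F is 2-laminar with all members of size ≥ 2 and F* is the set
of maximal elements of F \ {[n]}, with b_k members of cardinality k, then
|F| ≤ 1 + Σ_{2 ≤ k < n} f(k)·b_k. -/
theorem card_le_sum_f_mul (n : ℕ) (F : Finset (Finset (Fin n)))
    (hlam : ∀ A ∈ F, ∀ B ∈ F, 2 ≤ (A ∩ B).card → A ⊆ B ∨ B ⊆ A)
    (hcard : ∀ A ∈ F, 2 ≤ A.card)
    (Fstar : Finset (Finset (Fin n)))
    (hFstar : ∀ A : Finset (Fin n),
      A ∈ Fstar ↔ A ∈ F.erase Finset.univ ∧ ∀ B ∈ F.erase Finset.univ, A ⊆ B → A = B) :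
    F.card ≤ 1 + ∑ k ∈ Finset.Ico 2 n,
      f k * (Fstar.filter (fun A => A.card = k)).card := by
  set F' := F.erase univ
  have hcover : ∀ A ∈ F', ∃ M ∈ Fstar, A ≤ M := fun A hA => by
    obtain ⟨M, hAM, hM⟩ := F'.exists_le_maximal hA
    exact ⟨M, (hFstar M).2 ⟨hM.1, fun B hB hMB => le_antisymm hMB (hM.2 hB hMB)⟩, hAM⟩
  have hfiber : ∀ M ∈ Fstar, #(F'.filter (· ≤ M)) ≤ f (#M) := fun M _ => by
    have hsub : F'.filter (· ≤ M) ⊆ F := (filter_subset _ _).trans (erase_subset _ _)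
    exact card_le_f_card_of_forall_subset (IsLaminar.mono hlam hsub)
      (fun A hA => hcard A (hsub hA)) (fun A hA => (mem_filter.mp hA).2)
  have hsize : ∀ M ∈ Fstar, #M ∈ Ico 2 n := fun M hM => by
    obtain ⟨hMne, hMF⟩ := mem_erase.mp ((hFstar M).mp hM).1
    exact mem_Ico.mpr ⟨hcard M hMF, by simpa using card_lt_card (ssubset_univ_iff.mpr hMne)⟩
  calc #F ≤ 1 + #F' := by have : #F - 1 ≤ #F' := pred_card_le_card_erase; omega
    _ ≤ 1 + ∑ M ∈ Fstar, #(F'.filter (· ≤ M)) := by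
        gcongr; exact card_le_sum_card_filter_le hcover
    _ ≤ 1 + ∑ M ∈ Fstar, f (#M) := by gcongr with M hM; exact hfiber M hM
    _ = _ := by
        rw [← sum_fiberwise_of_maps_to' hsize]
        simp only [sum_const, smul_eq_mul, mul_comm]
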